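/- arXiv:1905.11043 — 2 statements merged into one kernel-verified Lean document; each statement's English description precedes it below -/
import Mathlib

section
/- For 1 ≤ k ≤ n, the function λ ↦ σ_k(λ)^{1/k} is concave on the positive cone Γ₊ = {λ ∈ ℝⁿ : λᵢ > 0 for all i}. -/
/-!
Write `Q_k(x) = σ_{k+1}(x) / σ_k(x)`. Expanding `σ_{k+1}` along each coordinate gives
`(k + 1) Q_k(x) = ∑ xᵢ - ∑ xᵢ² / (xᵢ + Q_{k-1}(x without xᵢ))`, and since `(a, c) ↦ a² / c` is
convex and homogeneous, induction on `k` shows that each `Q_k` is superadditive on the positive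
cone (Marcus–Lopes). Hence `σ_k = Q_0 ⋯ Q_{k-1}` is a product of `k` positive superadditive
functions, and AM-GM makes their geometric mean `σ_k^{1/k}` superadditive too. Being positively
homogeneous of degree one, `σ_k^{1/k}` is therefore concave.
-/

/-- The k-th elementary symmetric polynomial of `lam : Fin n → ℝ`. -/
noncomputable def sigmaE (n k : ℕ) (lam : Fin n → ℝ) : ℝ :=
  ∑ s ∈ Finset.powersetCard k (Finset.univ : Finset (Fin n)), ∏ i ∈ s, lam i

open Finset

lemma add_sq_div_add_le {R : Type*} [Field R] [LinearOrder R] [IsStrictOrderedRing R] {a b c d : R}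
    (hc : 0 < c) (hd : 0 < d) : (a + b) ^ 2 / (c + d) ≤ a ^ 2 / c + b ^ 2 / d := by
  simpa [Fin.sum_univ_two] using
    sq_sum_div_le_sum_sq_div univ ![a, b] (g := ![c, d]) (by simp [Fin.forall_fin_two, hc, hd])

theorem Real.geom_mean_weighted_add_geom_mean_weighted_le {κ : Type*} (t : Finset κ)
    {w a b : κ → ℝ} (hw : ∀ j ∈ t, 0 ≤ w j) (hw₁ : ∑ j ∈ t, w j = 1) (ha : ∀ j ∈ t, 0 < a j)
    (hb : ∀ j ∈ t, 0 < b j) :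
    ∏ j ∈ t, a j ^ w j + ∏ j ∈ t, b j ^ w j ≤ ∏ j ∈ t, (a j + b j) ^ w j := by
  have hab : ∀ j ∈ t, 0 < a j + b j := fun j hj => add_pos (ha j hj) (hb j hj)
  have hP : 0 < ∏ j ∈ t, (a j + b j) ^ w j := prod_pos fun j hj => Real.rpow_pos_of_pos (hab j hj) _
  -- AM-GM for the fractions `a j / (a j + b j)` and for `b j / (a j + b j)`, whose means add to one
  have hamgm : ∀ c : κ → ℝ, (∀ j ∈ t, 0 < c j) →
      (∏ j ∈ t, c j ^ w j) / ∏ j ∈ t, (a j + b j) ^ w j ≤ ∑ j ∈ t, w j * (c j / (a j + b j)) := by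
    intro c hc
    rw [← prod_div_distrib]
    calc ∏ j ∈ t, c j ^ w j / (a j + b j) ^ w j
        = ∏ j ∈ t, (c j / (a j + b j)) ^ w j :=
          prod_congr rfl fun j hj => (Real.div_rpow (hc j hj).le (hab j hj).le _).symm
      _ ≤ _ := Real.geom_mean_le_arith_mean_weighted t w _ hw hw₁
          fun j hj => (div_pos (hc j hj) (hab j hj)).le
  have hsum : ∑ j ∈ t, w j * (a j / (a j + b j)) + ∑ j ∈ t, w j * (b j / (a j + b j)) = 1 := by
    rw [← sum_add_distrib, ← hw₁]
    refine sum_congr rfl fun j hj => ?_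
    rw [← mul_add, ← add_div, div_self (hab j hj).ne', mul_one]
  rw [← div_le_one hP, add_div]
  linarith [hamgm a ha, hamgm b hb]

lemma concaveOn_of_superadditive_of_homogeneous {E : Type*} [AddCommMonoid E] [Module ℝ E]
    {s : Set E} {f : E → ℝ} (hs : Convex ℝ s) (hs_smul : ∀ x ∈ s, ∀ c : ℝ, 0 < c → c • x ∈ s)
    (hf_smul : ∀ x ∈ s, ∀ c : ℝ, 0 < c → f (c • x) = c * f x)
    (hf_add : ∀ x ∈ s, ∀ y ∈ s, f x + f y ≤ f (x + y)) : ConcaveOn ℝ s f := by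
  refine ⟨hs, fun x hx y hy a b ha hb hab => ?_⟩
  rcases ha.eq_or_lt with rfl | ha
  · obtain rfl : b = 1 := by linarith
    simp
  rcases hb.eq_or_lt with rfl | hb
  · obtain rfl : a = 1 := by linarith
    simp
  rw [smul_eq_mul, smul_eq_mul, ← hf_smul x hx a ha, ← hf_smul y hy b hb]
  exact hf_add _ (hs_smul x hx a ha) _ (hs_smul y hy b hb)

namespace Finset

variable {ι R : Type*}

section CommSemiring

variable [CommSemiring R]

def esymm (s : Finset ι) (k : ℕ) (x : ι → R) : R :=
  ∑ t ∈ s.powersetCard k, ∏ i ∈ t, x i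

@[simp]
lemma esymm_zero (s : Finset ι) (x : ι → R) : s.esymm 0 x = 1 := by
  simp [esymm]

lemma esymm_one (s : Finset ι) (x : ι → R) : s.esymm 1 x = ∑ i ∈ s, x i := by
  simp [esymm, powersetCard_one]

lemma esymm_smul (s : Finset ι) (k : ℕ) (c : R) (x : ι → R) :
    s.esymm k (c • x) = c ^ k * s.esymm k x := by
  rw [esymm, esymm, mul_sum]
  refine sum_congr rfl fun t ht => ?_
  simp only [Pi.smul_apply, smul_eq_mul, prod_mul_distrib, prod_const, (mem_powersetCard.1 ht).2]

variable [DecidableEq ι]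

lemma sum_filter_mem_powersetCard_prod {s : Finset ι} {i : ι} (hi : i ∈ s) (k : ℕ) (x : ι → R) :
    ∑ t ∈ s.powersetCard (k + 1) with i ∈ t, ∏ j ∈ t, x j = x i * (s.erase i).esymm k x := by
  rw [esymm, mul_sum]
  refine sum_bij' (fun t _ => t.erase i) (fun t _ => insert i t) ?_ ?_ ?_ ?_ ?_ <;>
    simp only [mem_filter, mem_powersetCard, subset_erase]
  · rintro t ⟨⟨hts, hcard⟩, hit⟩
    exact ⟨⟨(erase_subset i t).trans hts, notMem_erase i t⟩, by simp [hit, hcard]⟩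
  · rintro t ⟨⟨hts, hit⟩, hcard⟩
    exact ⟨⟨insert_subset hi hts, by rw [card_insert_of_notMem hit, hcard]⟩, mem_insert_self i t⟩
  · rintro t ⟨_, hit⟩
    exact insert_erase hit
  · rintro t ⟨⟨_, hit⟩, _⟩
    exact erase_insert hit
  · rintro t ⟨_, hit⟩
    exact (mul_prod_erase t x hit).symm

lemma esymm_succ_of_mem {s : Finset ι} {i : ι} (hi : i ∈ s) (k : ℕ) (x : ι → R) :
    s.esymm (k + 1) x = (s.erase i).esymm (k + 1) x + x i * (s.erase i).esymm k x := by
  rw [← sum_filter_mem_powersetCard_prod hi, esymm, esymm,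
    ← sum_filter_not_add_sum_filter _ (i ∈ ·)]
  congr 1
  refine sum_congr ?_ fun _ _ => rfl
  ext t
  simp only [mem_filter, mem_powersetCard, subset_erase]
  tauto

lemma sum_mul_esymm_erase (s : Finset ι) (k : ℕ) (x : ι → R) :
    ∑ i ∈ s, x i * (s.erase i).esymm k x = (k + 1) * s.esymm (k + 1) x := by
  calc ∑ i ∈ s, x i * (s.erase i).esymm k x
      = ∑ i ∈ s, ∑ t ∈ s.powersetCard (k + 1) with i ∈ t, ∏ j ∈ t, x j :=
        sum_congr rfl fun i hi => (sum_filter_mem_powersetCard_prod hi k x).symm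
    _ = ∑ t ∈ s.powersetCard (k + 1), ∑ i ∈ t, ∏ j ∈ t, x j := by
        refine sum_comm' fun i t => ?_
        simp only [mem_filter, mem_powersetCard]
        constructor
        · tauto
        · rintro ⟨hit, hts, hcard⟩
          exact ⟨hts hit, ⟨hts, hcard⟩, hit⟩
    _ = (k + 1) * s.esymm (k + 1) x := by
        rw [esymm, mul_sum]
        refine sum_congr rfl fun t ht => ?_
        rw [sum_const, (mem_powersetCard.1 ht).2, nsmul_eq_mul]
        push_cast
        ring

end CommSemiring

section LinearOrderedField

variable [Field R] [LinearOrder R] [IsStrictOrderedRing R] {s : Finset ι} {x y : ι → R}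

lemma esymm_pos {k : ℕ} (hx : ∀ i ∈ s, 0 < x i) (hk : k ≤ #s) : 0 < s.esymm k x :=
  sum_pos (fun _ ht => prod_pos fun i hi => hx i ((mem_powersetCard.1 ht).1 hi))
    (powersetCard_nonempty.2 hk)

def esymmRatio (s : Finset ι) (k : ℕ) (x : ι → R) : R :=
  s.esymm (k + 1) x / s.esymm k x

lemma esymmRatio_pos {k : ℕ} (hx : ∀ i ∈ s, 0 < x i) (hk : k + 1 ≤ #s) :
    0 < s.esymmRatio k x :=
  div_pos (esymm_pos hx hk) (esymm_pos hx (by omega))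

lemma prod_range_esymmRatio (hx : ∀ i ∈ s, 0 < x i) {k : ℕ} (hk : k ≤ #s) :
    ∏ j ∈ range k, s.esymmRatio j x = s.esymm k x := by
  induction k with
  | zero => simp
  | succ k ih =>
    rw [prod_range_succ, ih (by omega), esymmRatio, mul_div_cancel₀ _ (esymm_pos hx (by omega)).ne']

variable [DecidableEq ι]

lemma natCast_add_two_mul_esymmRatio_succ (hx : ∀ i ∈ s, 0 < x i) {k : ℕ} (hk : k + 2 ≤ #s) :
    (k + 2) * s.esymmRatio (k + 1) x
      = ∑ i ∈ s, x i - ∑ i ∈ s, x i ^ 2 / (x i + (s.erase i).esymmRatio k x) := by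
  have hterm : ∀ i ∈ s, x i * (s.erase i).esymm (k + 1) x / s.esymm (k + 1) x
      = x i - x i ^ 2 / (x i + (s.erase i).esymmRatio k x) := by
    intro i hi
    have hx' : ∀ j ∈ s.erase i, 0 < x j := fun j hj => hx j (mem_of_mem_erase hj)
    have hcard : #(s.erase i) = #s - 1 := card_erase_of_mem hi
    have h0 := esymm_pos hx' (k := k) (by omega)
    have h1 := esymm_pos hx' (k := k + 1) (by omega)
    have hxi := hx i hi
    rw [esymmRatio, esymm_succ_of_mem hi]
    field_simp
    ring
  calc (k + 2) * s.esymmRatio (k + 1) x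
      = (∑ i ∈ s, x i * (s.erase i).esymm (k + 1) x) / s.esymm (k + 1) x := by
        rw [sum_mul_esymm_erase, esymmRatio]
        push_cast
        ring
    _ = ∑ i ∈ s, (x i - x i ^ 2 / (x i + (s.erase i).esymmRatio k x)) := by
        rw [sum_div]
        exact sum_congr rfl hterm
    _ = _ := sum_sub_distrib ..

lemma esymmRatio_add_le (k : ℕ) (hk : k + 1 ≤ #s) (hx : ∀ i ∈ s, 0 < x i)
    (hy : ∀ i ∈ s, 0 < y i) :
    s.esymmRatio k x + s.esymmRatio k y ≤ s.esymmRatio k (x + y) := by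
  induction k generalizing s with
  | zero => simp [esymmRatio, esymm_one, sum_add_distrib]
  | succ k ih =>
    have hxy : ∀ i ∈ s, 0 < (x + y) i := fun i hi => add_pos (hx i hi) (hy i hi)
    have hterm : ∀ i ∈ s, (x + y) i ^ 2 / ((x + y) i + (s.erase i).esymmRatio k (x + y))
        ≤ x i ^ 2 / (x i + (s.erase i).esymmRatio k x)
          + y i ^ 2 / (y i + (s.erase i).esymmRatio k y) := by
      intro i hi
      have hcard : k + 1 ≤ #(s.erase i) := by rw [card_erase_of_mem hi]; omega
      have hx' : ∀ j ∈ s.erase i, 0 < x j := fun j hj => hx j (mem_of_mem_erase hj)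
      have hy' : ∀ j ∈ s.erase i, 0 < y j := fun j hj => hy j (mem_of_mem_erase hj)
      have hdx := add_pos (hx i hi) (esymmRatio_pos hx' hcard)
      have hdy := add_pos (hy i hi) (esymmRatio_pos hy' hcard)
      calc (x + y) i ^ 2 / ((x + y) i + (s.erase i).esymmRatio k (x + y))
          ≤ (x i + y i) ^ 2 / ((x i + (s.erase i).esymmRatio k x)
              + (y i + (s.erase i).esymmRatio k y)) := by
            have hQ_add := ih hcard hx' hy'
            refine div_le_div_of_nonneg_left (sq_nonneg _) (add_pos hdx hdy) ?_
            simp only [Pi.add_apply]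
            linarith
        _ ≤ _ := add_sq_div_add_le hdx hdy
    have hsum := sum_le_sum hterm
    have hk2 : (0 : R) < k + 2 := by positivity
    refine le_of_mul_le_mul_left ?_ hk2
    rw [mul_add, natCast_add_two_mul_esymmRatio_succ hx hk,
      natCast_add_two_mul_esymmRatio_succ hy hk, natCast_add_two_mul_esymmRatio_succ hxy hk]
    simp only [Pi.add_apply, sum_add_distrib] at hsum ⊢
    linarith

end LinearOrderedField

section Real

variable {s : Finset ι} {x y : ι → ℝ} {k : ℕ}

lemma esymm_smul_rpow (hk₀ : k ≠ 0) {c : ℝ} (hc : 0 ≤ c) (hx : 0 ≤ s.esymm k x) :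
    s.esymm k (c • x) ^ ((1 : ℝ) / k) = c * s.esymm k x ^ ((1 : ℝ) / k) := by
  rw [esymm_smul, Real.mul_rpow (pow_nonneg hc k) hx, one_div, Real.pow_rpow_inv_natCast hc hk₀]

lemma esymm_rpow_add_le [DecidableEq ι] (hk₀ : k ≠ 0) (hk : k ≤ #s) (hx : ∀ i ∈ s, 0 < x i)
    (hy : ∀ i ∈ s, 0 < y i) :
    s.esymm k x ^ ((1 : ℝ) / k) + s.esymm k y ^ ((1 : ℝ) / k)
      ≤ s.esymm k (x + y) ^ ((1 : ℝ) / k) := by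
  have hxy : ∀ i ∈ s, 0 < (x + y) i := fun i hi => add_pos (hx i hi) (hy i hi)
  have hQ : ∀ z : ι → ℝ, (∀ i ∈ s, 0 < z i) → ∀ j ∈ range k, 0 < s.esymmRatio j z :=
    fun z hz j hj => esymmRatio_pos hz (by rw [mem_range] at hj; omega)
  have hroot : ∀ z : ι → ℝ, (∀ i ∈ s, 0 < z i) →
      s.esymm k z ^ ((1 : ℝ) / k) = ∏ j ∈ range k, s.esymmRatio j z ^ ((1 : ℝ) / k) := by
    intro z hz
    rw [← prod_range_esymmRatio hz hk]
    exact (Real.finsetProd_rpow _ _ (fun j hj => (hQ z hz j hj).le) _).symm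
  have hw₁ : ∑ _j ∈ range k, (1 : ℝ) / k = 1 := by simp [hk₀]
  rw [hroot x hx, hroot y hy, hroot (x + y) hxy]
  calc _ ≤ ∏ j ∈ range k, (s.esymmRatio j x + s.esymmRatio j y) ^ ((1 : ℝ) / k) :=
        Real.geom_mean_weighted_add_geom_mean_weighted_le _ (fun _ _ => by positivity) hw₁
          (hQ x hx) (hQ y hy)
    _ ≤ _ := by
        refine prod_le_prod (fun j hj => ?_) fun j hj => ?_
        · exact Real.rpow_nonneg (add_pos (hQ x hx j hj) (hQ y hy j hj)).le _
        · exact Real.rpow_le_rpow (add_pos (hQ x hx j hj) (hQ y hy j hj)).le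
            (esymmRatio_add_le j (by rw [mem_range] at hj; omega) hx hy) (by positivity)

end Real

end Finset

theorem stmt9 (n k : ℕ) (hk1 : 1 ≤ k) (hkn : k ≤ n) :
    ConcaveOn ℝ {lam : Fin n → ℝ | ∀ i, 0 < lam i}
      (fun lam => (sigmaE n k lam) ^ ((1 : ℝ) / (k : ℝ))) := by
  show ConcaveOn ℝ _ fun lam => univ.esymm k lam ^ ((1 : ℝ) / k)
  have hk₀ : k ≠ 0 := by omega
  have hcard : k ≤ #(univ : Finset (Fin n)) := by simpa using hkn
  have hcone : Convex ℝ {lam : Fin n → ℝ | ∀ i, 0 < lam i} := by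
    simpa [Set.pi] using convex_pi (s := Set.univ) fun (_ : Fin n) _ => convex_Ioi (0 : ℝ)
  refine concaveOn_of_superadditive_of_homogeneous hcone
    (fun x hx c hc i => mul_pos hc (hx i)) (fun x hx c hc => ?_) (fun x hx y hy => ?_)
  · exact esymm_smul_rpow hk₀ hc.le (esymm_pos (fun i _ => hx i) hcard).le
  · exact esymm_rpow_add_le hk₀ hcard (fun i _ => hx i) (fun i _ => hy i)
end

section
/- By the concavity of σ_k^{1/k}, if λ ∈ Γ₊ and (b_{ij;1}) is any symmetric matrix diagonal in the eigenbasis with diagonal entries b_{ii;1}, then −Σ_{i≠j} σ_{k-2}(λ|ij)·b_{ii;1}·b_{jj;1} ≥ −((k−1)/k)·(Σᵢ σ_{k-1}(λ|i) b_{ii;1})²/σ_k(λ). Equivalently: for λ ∈ Γ₊ and any vector μ ∈ ℝⁿ, Σ_{i≠j} σ_{k-2}(λ|ij) μᵢμⱼ ≤ ((k−1)/k)·(Σᵢ σ_{k-1}(λ|i) μᵢ)² / σ_k(λ). -/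
/-- The (k-1)-th elementary symmetric polynomial of the variables with `lam i` deleted,
`σ_{k-1}(λ|i) = ∂σ_k/∂λ_i`. -/
noncomputable def sigmaE1 (n k : ℕ) (lam : Fin n → ℝ) (i : Fin n) : ℝ :=
  ∑ s ∈ Finset.powersetCard k ((Finset.univ : Finset (Fin n)).erase i), ∏ j ∈ s, lam j

/-- `σ_{k-2}(λ|ij) = ∂²σ_k/∂λ_i∂λ_j` (for `i ≠ j`): the sum over subsets avoiding `i, j`
whose cardinality plus 2 equals `k` (so it vanishes when `k < 2`). -/
noncomputable def sigmaE2 (n k : ℕ) (lam : Fin n → ℝ) (i j : Fin n) : ℝ :=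
  ∑ s ∈ (((Finset.univ : Finset (Fin n)).erase i).erase j).powerset.filter
      (fun s => s.card + 2 = k), ∏ m ∈ s, lam m

open Polynomial Finset

namespace Multiset

theorem esymm_one {R : Type*} [CommSemiring R] (s : Multiset R) : s.esymm 1 = s.sum := by
  simp [esymm, powersetCard_one, map_map]

theorem esymm_cons_succ {R : Type*} [CommSemiring R] (a : R) (s : Multiset R) (k : ℕ) :
    (a ::ₘ s).esymm (k + 1) = s.esymm (k + 1) + a * s.esymm k := by
  simp [esymm, powersetCard_cons, map_map, sum_map_mul_left]

theorem sq_sum_eq_sum_sq_add_two_mul_esymm_two {R : Type*} [CommSemiring R] (s : Multiset R) :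
    s.sum ^ 2 = (s.map (· ^ 2)).sum + 2 * s.esymm 2 := by
  induction s using Multiset.induction_on with
  | empty => simp [esymm, powersetCard_zero_right]
  | cons a s ih =>
    rw [esymm_cons_succ, esymm_one, sum_cons, map_cons, sum_cons, add_sq, ih]
    ring

theorem sq_sum_le_card_mul_sum_sq (s : Multiset ℝ) :
    s.sum ^ 2 ≤ card s * (s.map (· ^ 2)).sum := by
  have h := _root_.sq_sum_le_card_mul_sum_sq (s := s.toEnumFinset) (f := Prod.fst)
  have hsq : s.map (· ^ 2) = s.toEnumFinset.val.map (·.1 ^ 2) := by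
    conv_lhs => rw [← map_toEnumFinset_fst s, map_map]
    rfl
  rwa [Finset.sum_eq_multiset_sum, Finset.sum_eq_multiset_sum, map_toEnumFinset_fst,
    card_toEnumFinset, ← hsq] at h

theorem two_mul_card_mul_esymm_two_le (s : Multiset ℝ) :
    2 * card s * s.esymm 2 ≤ (card s - 1) * s.sum ^ 2 := by
  linear_combination
    sq_sum_le_card_mul_sum_sq s - (card s : ℝ) * sq_sum_eq_sum_sq_add_two_mul_esymm_two s

end Multiset

theorem Polynomial.Splits.two_mul_natDegree_mul_leadingCoeff_mul_coeff_le {p : ℝ[X]}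
    (hp : p.Splits) (hd : 2 ≤ p.natDegree) :
    2 * p.natDegree * p.leadingCoeff * p.coeff (p.natDegree - 2)
      ≤ (p.natDegree - 1) * p.coeff (p.natDegree - 1) ^ 2 := by
  have hcard : (Multiset.card p.roots : ℝ) = p.natDegree := by
    rw [← hp.natDegree_eq_card_roots]
  have h1 := coeff_eq_esymm_roots_of_splits hp (k := p.natDegree - 1) (by omega)
  have h2 := coeff_eq_esymm_roots_of_splits hp (k := p.natDegree - 2) (by omega)
  rw [Nat.sub_sub_self (by omega), pow_one, Multiset.esymm_one] at h1
  rw [Nat.sub_sub_self hd] at h2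
  have hnewton := p.roots.two_mul_card_mul_esymm_two_le
  rw [hcard] at hnewton
  rw [h1, h2]
  linear_combination p.leadingCoeff ^ 2 * hnewton

namespace Polynomial

def IsUpperStable (P : ℂ[X]) : Prop :=
  ∀ w : ℂ, 0 ≤ w.im → P.eval w ≠ 0

theorem natDegree_iterate_derivative_eq {R : Type*} [Semiring R] [IsAddTorsionFree R]
    (P : R[X]) (j : ℕ) : (derivative^[j] P).natDegree = P.natDegree - j := by
  induction j with
  | zero => rfl
  | succ j ih => rw [Function.iterate_succ_apply', natDegree_derivative, ih, Nat.sub_sub]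

namespace IsUpperStable

variable {P : ℂ[X]}

theorem derivative (hP : P.IsUpperStable) (hdeg : P.natDegree ≠ 0) :
    (Polynomial.derivative P).IsUpperStable := by
  intro w hw hroot
  have hroots : P.rootSet ℂ ⊆ {z : ℂ | z.im < 0} := by
    intro z hz
    rw [mem_rootSet, coe_aeval_eq_eval] at hz
    by_contra! h
    exact hP z (not_lt.mp h) hz.2
  have hw' : w ∈ (Polynomial.derivative P).rootSet ℂ := by
    rw [mem_rootSet, coe_aeval_eq_eval]
    exact ⟨derivative_ne_zero.mpr hdeg, hroot⟩
  have hw_neg : w.im < 0 :=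
    convexHull_min hroots (convex_halfSpace_lt Complex.imLm.isLinear 0)
      (rootSet_derivative_subset_convexHull_rootSet (natDegree_pos_iff_degree_pos.mp
        (Nat.pos_of_ne_zero hdeg)) hw')
  exact hw_neg.not_ge hw

theorem iterate_derivative (hP : P.IsUpperStable) {j : ℕ} (hj : j ≤ P.natDegree) :
    (Polynomial.derivative^[j] P).IsUpperStable := by
  induction j with
  | zero => exact hP
  | succ j ih =>
    rw [Function.iterate_succ_apply']
    refine (ih (by omega)).derivative ?_
    rw [natDegree_iterate_derivative_eq]
    omega

theorem coeff_ne_zero (hP : P.IsUpperStable) {j : ℕ} (hj : j ≤ P.natDegree) :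
    P.coeff j ≠ 0 := by
  have h := hP.iterate_derivative hj 0 le_rfl
  rw [← coeff_zero_eq_eval_zero, coeff_iterate_derivative, zero_add, smul_ne_zero_iff] at h
  exact h.2

end IsUpperStable

theorem splits_of_forall_im_pos_aeval_ne_zero {p : ℝ[X]}
    (h : ∀ w : ℂ, 0 < w.im → aeval w p ≠ 0) : p.Splits := by
  refine Splits.of_splits_map (algebraMap ℝ ℂ) (IsAlgClosed.splits _) fun z hz => ?_
  have hz : aeval z p = 0 := by
    rw [mem_roots', IsRoot, eval_map_algebraMap] at hz
    exact hz.2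
  have him : z.im = 0 := by
    rcases lt_trichotomy z.im 0 with hneg | hzero | hpos
    · refine absurd ?_ (h (starRingEnd ℂ z) (by simpa using hneg))
      rw [aeval_conj, hz, map_zero]
    · exact hzero
    · exact absurd hz (h z hpos)
  exact ⟨z.re, Complex.ext (by simp) (by simp [him])⟩

end Polynomial

theorem Multiset.esymm_ne_zero_of_forall_im_pos {s : Multiset ℂ} (hs : ∀ z ∈ s, 0 < z.im)
    {k : ℕ} (hk : k ≤ card s) : s.esymm k ≠ 0 := by
  set P : ℂ[X] := (s.map fun z => X + C z).prod
  have hdeg : P.natDegree = card s := by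
    simp [P, natDegree_multiset_prod_of_monic, monic_X_add_C]
  have hstable : P.IsUpperStable := by
    intro w hw
    simp only [P, eval_multiset_prod, map_map, Function.comp_apply, eval_add, eval_X, eval_C]
    refine prod_ne_zero fun h => ?_
    obtain ⟨z, hz, hwz⟩ := mem_map.mp h
    have him := congrArg Complex.im hwz
    rw [Complex.add_im, Complex.zero_im] at him
    linarith [hs z hz]
  have := hstable.coeff_ne_zero (j := card s - k) (by omega)
  rwa [prod_X_add_C_coeff s (by omega), Nat.sub_sub_self hk] at this

namespace Finset

variable {ι R : Type*}

theorem coeff_prod_C_mul_X_add_C [CommSemiring R] [DecidableEq ι] (s : Finset ι) (a b : ι → R)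
    (j : ℕ) :
    (∏ i ∈ s, (C (b i) * X + C (a i))).coeff j
      = ∑ t ∈ s.powersetCard j, (∏ i ∈ t, b i) * ∏ i ∈ s \ t, a i := by
  simp_rw [prod_add, prod_mul_distrib, prod_const, ← map_prod, finsetSum_coeff,
    mul_right_comm _ (X ^ _), ← map_mul, coeff_C_mul_X_pow, powersetCard_eq_filter, sum_filter,
    eq_comm (a := j)]

theorem sum_powersetCard_sum_powersetCard_sdiff [DecidableEq ι] [AddCommMonoid R]
    (s : Finset ι) {j k : ℕ} (hjk : j ≤ k) (F : Finset ι → Finset ι → R) :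
    ∑ S ∈ s.powersetCard k, ∑ t ∈ S.powersetCard j, F t (S \ t)
      = ∑ t ∈ s.powersetCard j, ∑ u ∈ (s \ t).powersetCard (k - j), F t u := by
  rw [sum_sigma', sum_sigma']
  refine sum_nbij' (fun p => ⟨p.2, p.1 \ p.2⟩) (fun p => ⟨p.1 ∪ p.2, p.1⟩) ?_ ?_ ?_ ?_ ?_
  · rintro ⟨S, t⟩ h
    simp only [mem_sigma, mem_powersetCard] at h ⊢
    obtain ⟨⟨hSs, hSk⟩, htS, htj⟩ := h
    refine ⟨⟨htS.trans hSs, htj⟩, sdiff_subset_sdiff hSs le_rfl, ?_⟩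
    rw [card_sdiff_of_subset htS, hSk, htj]
  · rintro ⟨t, u⟩ h
    simp only [mem_sigma, mem_powersetCard, subset_sdiff] at h ⊢
    obtain ⟨⟨hts, htj⟩, ⟨hus, hdisj⟩, huk⟩ := h
    refine ⟨⟨union_subset hts hus, ?_⟩, subset_union_left, htj⟩
    rw [card_union_of_disjoint hdisj.symm, htj, huk]
    omega
  · rintro ⟨S, t⟩ h
    simp only [mem_sigma, mem_powersetCard] at h
    simp [union_sdiff_of_subset h.2.1]
  · rintro ⟨t, u⟩ h
    simp only [mem_sigma, mem_powersetCard, subset_sdiff] at h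
    simp [union_sdiff_cancel_left h.2.1.2.symm]
  · exact fun _ _ => rfl

theorem two_mul_sum_powersetCard_two [CommRing R] [DecidableEq ι] (s : Finset ι) (f : ι → R) :
    2 * ∑ u ∈ s.powersetCard 2, ∏ i ∈ u, f i = ∑ i ∈ s, ∑ j ∈ s.erase i, f i * f j := by
  have h := Multiset.sq_sum_eq_sum_sq_add_two_mul_esymm_two (s.val.map f)
  rw [Finset.esymm_map_val, Multiset.map_map] at h
  simp only [← sum_eq_multiset_sum, Function.comp_apply] at h
  have hrow : ∀ i ∈ s, ∑ j ∈ s.erase i, f i * f j = f i * ∑ j ∈ s, f j - f i ^ 2 := by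
    intro i hi
    rw [← mul_sum, sum_erase_eq_sub hi]
    ring
  rw [sum_congr rfl hrow, sum_sub_distrib, ← sum_mul]
  linear_combination -h

end Finset

section SigmaLine

variable {n k : ℕ} (lam μ : Fin n → ℝ)

/-- The polynomial `t ↦ σ_k(μ + t λ)`. -/
noncomputable def sigmaLine (n k : ℕ) (lam μ : Fin n → ℝ) : ℝ[X] :=
  ∑ S ∈ powersetCard k (univ : Finset (Fin n)), ∏ i ∈ S, (C (lam i) * X + C (μ i))

theorem coeff_sigmaLine {j : ℕ} (hj : j ≤ k) :
    (sigmaLine n k lam μ).coeff j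
      = ∑ t ∈ powersetCard j univ,
          (∏ i ∈ t, lam i) * ∑ u ∈ (univ \ t).powersetCard (k - j), ∏ i ∈ u, μ i := by
  simp_rw [sigmaLine, finsetSum_coeff, coeff_prod_C_mul_X_add_C, mul_sum]
  exact sum_powersetCard_sum_powersetCard_sdiff _ hj fun t u => (∏ i ∈ t, lam i) * ∏ i ∈ u, μ i

theorem coeff_sigmaLine_self : (sigmaLine n k lam μ).coeff k = sigmaE n k lam := by
  simp [coeff_sigmaLine lam μ le_rfl, sigmaE]

theorem coeff_sigmaLine_sub_one (hk : 1 ≤ k) :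
    (sigmaLine n k lam μ).coeff (k - 1) = ∑ i, sigmaE1 n (k - 1) lam i * μ i := by
  rw [coeff_sigmaLine lam μ (Nat.sub_le k 1), Nat.sub_sub_self hk]
  simp_rw [powersetCard_one, sum_map, sigmaE1, sum_mul, Function.Embedding.coeFn_mk,
    prod_singleton, mul_sum]
  refine sum_comm' fun t i => ?_
  simp only [mem_powersetCard, mem_sdiff, subset_erase]
  tauto

theorem two_mul_coeff_sigmaLine_sub_two (hk : 2 ≤ k) :
    2 * (sigmaLine n k lam μ).coeff (k - 2)
      = ∑ i, ∑ j ∈ univ.erase i, sigmaE2 n k lam i j * μ i * μ j := by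
  rw [coeff_sigmaLine lam μ (Nat.sub_le k 2), Nat.sub_sub_self hk, mul_sum]
  simp_rw [mul_left_comm (2 : ℝ), two_mul_sum_powersetCard_two, mul_sum, sigmaE2, sum_mul,
    ← mul_assoc]
  rw [sum_comm' (t' := univ) (s' := fun i => powersetCard (k - 2) (univ.erase i))]
  · refine sum_congr rfl fun i _ => sum_comm' fun t j => ?_
    simp only [mem_powersetCard, mem_filter, mem_powerset, mem_erase, mem_sdiff, subset_erase]
    rw [show #t = k - 2 ↔ #t + 2 = k by omega]
    tauto
  · intro t i
    simp only [mem_powersetCard, mem_sdiff, subset_erase]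
    tauto

theorem natDegree_sigmaLine_le : (sigmaLine n k lam μ).natDegree ≤ k := by
  refine natDegree_sum_le_of_forall_le _ _ fun S hS => ?_
  calc (∏ i ∈ S, (C (lam i) * X + C (μ i))).natDegree
      _ ≤ ∑ i ∈ S, (C (lam i) * X + C (μ i)).natDegree := natDegree_prod_le _ _
      _ ≤ ∑ _i ∈ S, 1 := by gcongr; exact natDegree_linear_le
      _ = k := by simp [(mem_powersetCard.mp hS).2]

theorem aeval_sigmaLine (w : ℂ) :
    aeval w (sigmaLine n k lam μ)
      = (univ.val.map fun i => lam i * w + μ i).esymm k := by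
  rw [Finset.esymm_map_val]
  simp [sigmaLine]

theorem sigmaLine_splits (hkn : k ≤ n) (hpos : ∀ i, 0 < lam i) : (sigmaLine n k lam μ).Splits := by
  refine splits_of_forall_im_pos_aeval_ne_zero fun w hw => ?_
  rw [aeval_sigmaLine]
  refine Multiset.esymm_ne_zero_of_forall_im_pos ?_ (by simpa using hkn)
  simp only [Multiset.mem_map, mem_val, mem_univ, true_and, forall_exists_index,
    forall_apply_eq_imp_iff]
  intro i
  simpa using mul_pos (hpos i) hw

end SigmaLine

theorem sigmaE2_eq_zero_of_lt_two {n k : ℕ} (hk : k < 2) (lam : Fin n → ℝ) (i j : Fin n) :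
    sigmaE2 n k lam i j = 0 := by
  rw [sigmaE2, filter_false_of_mem fun s _ => by omega, sum_empty]

theorem sigmaE_pos {n k : ℕ} (hkn : k ≤ n) {lam : Fin n → ℝ} (hpos : ∀ i, 0 < lam i) :
    0 < sigmaE n k lam :=
  sum_pos (fun _ _ => prod_pos fun i _ => hpos i) (powersetCard_nonempty.mpr (by simpa using hkn))

theorem stmt13 (n k : ℕ) (hk1 : 1 ≤ k) (hkn : k ≤ n) (lam : Fin n → ℝ)
    (hpos : ∀ i, 0 < lam i) (μ : Fin n → ℝ) :
    ∑ i, ∑ j ∈ Finset.univ.erase i, sigmaE2 n k lam i j * μ i * μ j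
      ≤ (((k : ℝ) - 1) / k) * (∑ i, sigmaE1 n (k - 1) lam i * μ i) ^ 2 / sigmaE n k lam := by
  obtain rfl | hk2 : k = 1 ∨ 2 ≤ k := by omega
  · simp [sigmaE2_eq_zero_of_lt_two]
  have hσ := sigmaE_pos hkn hpos
  have hdeg : (sigmaLine n k lam μ).natDegree = k :=
    le_antisymm (natDegree_sigmaLine_le lam μ)
      (le_natDegree_of_ne_zero (by rw [coeff_sigmaLine_self]; exact hσ.ne'))
  have hnewton := (sigmaLine_splits lam μ hkn hpos).two_mul_natDegree_mul_leadingCoeff_mul_coeff_le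
    (by omega)
  rw [leadingCoeff, hdeg, coeff_sigmaLine_self, coeff_sigmaLine_sub_one lam μ hk1] at hnewton
  rw [← two_mul_coeff_sigmaLine_sub_two lam μ hk2, div_mul_eq_mul_div, div_div,
    le_div_iff₀ (by positivity)]
  linear_combination hnewton
end
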